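/- Let A=(S,R) be a finite argumentation network and let λ be a complete extension of A. Then the assignment h_λ (defined by h_λ(x)=(⊤,⊤) if λ(x)=in, h_λ(x)=(⊥,⊥) if λ(x)=out, h_λ(x)=(⊥,⊤) if λ(x)=und) satisfies t ⊨_{h_λ} φ for every formula φ in Δ_A. -/

import Mathlib

/-- The three Caminada labels. -/
inductive Label where
  | in_ : Label
  | out : Label
  | und : Label
deriving DecidableEq

/-- Propositional intuitionistic formulas over atoms `α`, with the
distinguished constant `nconst` (the paper's `n`). -/
inductive Form (α : Type) where
  | atom : α → Form α
  | nconst : Form α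
  | top : Form α
  | bot : Form α
  | and : Form α → Form α → Form α
  | or : Form α → Form α → Form α
  | imp : Form α → Form α → Form α
  | neg : Form α → Form α

/-- Forcing in the two-world Kripke model: world `false` is `t`, world `true`
is `s`, with `t < s` (i.e. the Bool order). `h` assigns to each atom its pair
of truth values (at `t`, at `s`). The constant `n` has value `(⊥,⊤)`. -/
def force {α : Type} (h : α → Bool × Bool) : Bool → Form α → Prop
  | w, .atom x => (if w then (h x).2 else (h x).1) = true
  | w, .nconst => w = true
  | _, .top => True
  | _, .bot => False
  | w, .and A B => force h w A ∧ force h w B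
  | w, .or A B => force h w A ∨ force h w B
  | w, .imp A B => ∀ v : Bool, w ≤ v → force h v A → force h v B
  | w, .neg A => ∀ v : Bool, w ≤ v → ¬ force h v A

/-- An assignment is legitimate when no atom gets the forbidden value `(⊤,⊥)`. -/
def Persistent {α : Type} (h : α → Bool × Bool) : Prop :=
  ∀ x, (h x).1 = true → (h x).2 = true

def bigAnd {α : Type} : List (Form α) → Form α
  | [] => .top
  | f :: fs => .and f (bigAnd fs)

def bigOr {α : Type} : List (Form α) → Form α
  | [] => .bot
  | f :: fs => .or f (bigOr fs)

/-- The list of attackers of `x` in the network `(α, R)`. -/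
noncomputable def attackers {α : Type} [Fintype α] (R : α → α → Prop) [DecidableRel R] (x : α) : List α :=
  (Finset.univ.filter (fun y => R y x)).toList

/-- (a1)  `x → (n ∨ ⋀_{yRx} ¬y)` -/
noncomputable def fa1 {α : Type} [Fintype α] (R : α → α → Prop) [DecidableRel R] (x : α) : Form α :=
  .imp (.atom x) (.or .nconst (bigAnd ((attackers R x).map (fun y => .neg (.atom y)))))

/-- (a2)  `(⋀_{yRx} ¬y) → (n ∨ x)` -/
noncomputable def fa2 {α : Type} [Fintype α] (R : α → α → Prop) [DecidableRel R] (x : α) : Form α :=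
  .imp (bigAnd ((attackers R x).map (fun y => .neg (.atom y)))) (.or .nconst (.atom x))

/-- (b1)  `¬x → (n ∨ ⋁_{yRx} y)` -/
noncomputable def fb1 {α : Type} [Fintype α] (R : α → α → Prop) [DecidableRel R] (x : α) : Form α :=
  .imp (.neg (.atom x)) (.or .nconst (bigOr ((attackers R x).map (fun y => .atom y))))

/-- (b2)  `(⋁_{yRx} y) → (¬x ∨ n)` -/
noncomputable def fb2 {α : Type} [Fintype α] (R : α → α → Prop) [DecidableRel R] (x : α) : Form α :=
  .imp (bigOr ((attackers R x).map (fun y => .atom y))) (.or (.neg (.atom x)) .nconst)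

/-- `h` is a model of the theory `Δ_A`: every formula of `Δ_A` holds at `t`. -/
def ModelsDelta {α : Type} [Fintype α] (h : α → Bool × Bool)
    (R : α → α → Prop) [DecidableRel R] : Prop :=
  ∀ x, force h false (fa1 R x) ∧ force h false (fa2 R x) ∧
    force h false (fb1 R x) ∧ force h false (fb2 R x)

/-- Caminada labelling / complete extension of the network `(α, R)`. -/
def IsCompleteExt {α : Type} (R : α → α → Prop) (l : α → Label) : Prop :=
  (∀ x, l x = .in_ ↔ ∀ y, R y x → l y = .out) ∧
  (∀ x, l x = .out ↔ ∃ y, R y x ∧ l y = .in_) ∧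
  (∀ x, l x = .und ↔ ((∀ y, R y x → l y ≠ .in_) ∧ ∃ y, R y x ∧ l y = .und))

/-- The labelling `λ_h` induced by an assignment `h`. -/
def lamOf {α : Type} (h : α → Bool × Bool) (x : α) : Label :=
  if h x = (true, true) then .in_ else if h x = (false, false) then .out else .und

/-- The assignment `h_λ` induced by a labelling `λ`. -/
def assignOf {α : Type} (l : α → Label) (x : α) : Bool × Bool :=
  match l x with
  | .in_ => (true, true)
  | .out => (false, false)
  | .und => (false, true)

/-! At the world `s` the constant `n` holds, so every formula of `Δ_A` is forced there and only
the world `t` needs checking. Under `h_λ` an atom is forced at `t` iff it is labelled `in`, and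
its negation iff it is labelled `out`; with these readings (a1)–(b2) are literally the two
directions of the Caminada conditions (C1) and (C2). -/

lemma mem_attackers {α : Type} [Fintype α] (R : α → α → Prop) [DecidableRel R] {x y : α} :
    y ∈ attackers R x ↔ R y x := by
  simp [attackers]

section Forcing

variable {α : Type} (h : α → Bool × Bool)

lemma force_bigAnd (w : Bool) (L : List (Form α)) :
    force h w (bigAnd L) ↔ ∀ f ∈ L, force h w f := by
  induction L with
  | nil => simp [bigAnd, force]
  | cons f fs ih => simp [bigAnd, force, ih]

lemma force_bigOr (w : Bool) (L : List (Form α)) :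
    force h w (bigOr L) ↔ ∃ f ∈ L, force h w f := by
  induction L with
  | nil => simp [bigOr, force]
  | cons f fs ih => simp [bigOr, force, ih]

lemma force_false_atom (y : α) : force h false (.atom y) ↔ (h y).1 = true := by
  simp [force]

lemma force_neg_atom {h : α → Bool × Bool} (hp : Persistent h) (w : Bool) (y : α) :
    force h w (.neg (.atom y)) ↔ (h y).2 = false := by
  have hp := hp y
  revert hp
  cases w <;> simp only [force, Bool.forall_bool] <;> cases (h y).1 <;> cases (h y).2 <;> simp

lemma force_false_imp_iff {A B : Form α} (hB : force h true B) :
    force h false (.imp A B) ↔ (force h false A → force h false B) := by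
  simp [force, Bool.forall_bool, hB]

lemma force_false_imp_nconst_or_iff (A B : Form α) :
    force h false (.imp A (.or .nconst B)) ↔ (force h false A → force h false B) := by
  rw [force_false_imp_iff h (B := .or .nconst B) (Or.inl rfl)]
  simp [force]

lemma force_false_imp_or_nconst_iff (A B : Form α) :
    force h false (.imp A (.or B .nconst)) ↔ (force h false A → force h false B) := by
  rw [force_false_imp_iff h (B := .or B .nconst) (Or.inr rfl)]
  simp [force]

end Forcing

section AssignOf

variable {α : Type} (l : α → Label)

lemma persistent_assignOf : Persistent (assignOf l) := by
  intro x
  cases hx : l x <;> simp [assignOf, hx]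

lemma assignOf_fst_eq_true_iff (x : α) : (assignOf l x).1 = true ↔ l x = .in_ := by
  cases hx : l x <;> simp [assignOf, hx]

lemma assignOf_snd_eq_false_iff (x : α) : (assignOf l x).2 = false ↔ l x = .out := by
  cases hx : l x <;> simp [assignOf, hx]

lemma force_assignOf_false_atom (y : α) : force (assignOf l) false (.atom y) ↔ l y = .in_ := by
  rw [force_false_atom, assignOf_fst_eq_true_iff]

lemma force_assignOf_neg_atom (w : Bool) (y : α) :
    force (assignOf l) w (.neg (.atom y)) ↔ l y = .out := by
  rw [force_neg_atom (persistent_assignOf l), assignOf_snd_eq_false_iff]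

variable [Fintype α] (R : α → α → Prop) [DecidableRel R]

lemma force_assignOf_bigAnd_neg_attackers (w : Bool) (x : α) :
    force (assignOf l) w (bigAnd ((attackers R x).map fun y => .neg (.atom y))) ↔
      ∀ y, R y x → l y = .out := by
  simp [force_bigAnd, force_assignOf_neg_atom, mem_attackers]

lemma force_assignOf_bigOr_attackers (x : α) :
    force (assignOf l) false (bigOr ((attackers R x).map fun y => .atom y)) ↔
      ∃ y, R y x ∧ l y = .in_ := by
  simp [force_bigOr, force_assignOf_false_atom, mem_attackers]

end AssignOf

theorem stmt1_general {α : Type} [Fintype α] (R : α → α → Prop) [DecidableRel R]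
    (l : α → Label) (hl : IsCompleteExt R l) :
    ModelsDelta (assignOf l) R := by
  obtain ⟨hin, hout, -⟩ := hl
  intro x
  simp only [fa1, fa2, fb1, fb2, force_false_imp_nconst_or_iff, force_false_imp_or_nconst_iff,
    force_assignOf_false_atom, force_assignOf_neg_atom, force_assignOf_bigAnd_neg_attackers,
    force_assignOf_bigOr_attackers]
  exact ⟨(hin x).1, (hin x).2, (hout x).1, (hout x).2⟩

/-- If `λ` is a complete extension of `A = (S,R)`, then the assignment `h_λ`
satisfies every formula of `Δ_A` at the actual world `t`. -/
theorem stmt1 {α : Type} [Fintype α] [Nonempty α] (R : α → α → Prop) [DecidableRel R]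
    (l : α → Label) (hl : IsCompleteExt R l) :
    ModelsDelta (assignOf l) R :=
  stmt1_general R l hl
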